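/- arXiv:0708.2182 — 4 statements merged into one kernel-verified Lean document; each statement's English description precedes it below -/
import Mathlib

section
/- Let A = [[a, b],[c, d]] ∈ Sp(1,1) (quaternionic 2×2 matrices with A*J₁A = J₁, J₁ = diag(1,−1)) satisfy A(1,1)ᵗ = λ(1,1)ᵗ for some λ ∈ Sp(1) (unit quaternion). Then c = a − λ, b = λ − a, and d = 2λ − a after normalizing a to be a positive real number, in which case Re λ = 1/a. -/
/-!
The eigenvector equation says `a + b = λ = c + d`. Substituting `b = λ - a` and `d = λ - c` into
the off-diagonal entry `a b - c̄ d = 0` of `A* J₁ A = J₁` and adding the diagonal entry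
`a² - c̄ c = 1` gives `(a - c̄) λ = 1`; as `λ` is a unit quaternion, `a - c̄ = λ̄`, i.e. `c = a - λ`.
Then `|a - λ|² = a² - 1` expands to `a² - 2a Re λ + 1 = a² - 1`.
-/

open Matrix

theorem of_fin_two_mulVec_one_one {R : Type*} [NonAssocSemiring R] (a b c d : R) :
    (of ![![a, b], ![c, d]]).mulVec ![1, 1] = ![a + b, c + d] := by
  ext i
  fin_cases i <;> simp [mulVec, dotProduct]

section StarRing

variable {R : Type*} [Ring R] [StarRing R]

theorem conjTranspose_mul_diagonal_one_neg_one_mul_fin_two (a b c d : R) :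
    (of ![![a, b], ![c, d]])ᴴ * diagonal ![1, -1] * of ![![a, b], ![c, d]] =
      !![star a * a - star c * c, star a * b - star c * d;
        star b * a - star d * c, star b * b - star d * d] := by
  rw [diagonal_fin_two]
  ext i j
  fin_cases i <;> fin_cases j <;> simp [mul_apply] <;> noncomm_ring

theorem eq_sub_of_star_mul_sub_star_mul {a c lam : R} (ha : IsSelfAdjoint a)
    (hlam : lam * star lam = 1) (h00 : star a * a - star c * c = 1)
    (h01 : star a * (lam - a) - star c * (lam - c) = 0) : c = a - lam := by
  have hinv : (a - star c) * lam = 1 := by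
    rw [← h00, ha.star_eq, ← sub_eq_zero, ← h01, ha.star_eq]
    noncomm_ring
  have hstar : a - c = lam := by
    simpa [ha.star_eq] using congrArg star (left_inv_eq_right_inv hinv hlam)
  rw [← hstar]
  abel

end StarRing

theorem Quaternion.mul_re_eq_one_of_star_mul_self {a : ℝ} {lam : Quaternion ℝ}
    (hlam : star lam * lam = 1)
    (h : star ((a : Quaternion ℝ) - lam) * ((a : Quaternion ℝ) - lam) = a * a - 1) :
    a * lam.re = 1 := by
  have hlam_re := congrArg QuaternionAlgebra.re hlam
  have h_re := congrArg QuaternionAlgebra.re h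
  simp only [re_mul, re_star, imI_star, imJ_star, imK_star, re_one, star_sub, star_coe, re_sub,
    re_coe, imI_sub, imI_coe, imJ_sub, imJ_coe, imK_sub, imK_coe] at hlam_re h_re
  linarith

theorem sp11_parabolic_form_general (a : ℝ) (b c d lam : Quaternion ℝ)
    (hlam : star lam * lam = 1)
    (hA : (Matrix.of ![![(a : Quaternion ℝ), b], ![c, d]])ᴴ *
            Matrix.diagonal ![1, -1] *
            Matrix.of ![![(a : Quaternion ℝ), b], ![c, d]]
          = Matrix.diagonal ![1, -1])
    (heig : (Matrix.of ![![(a : Quaternion ℝ), b], ![c, d]]).mulVec ![1, 1] = ![lam, lam]) :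
    c = (a : Quaternion ℝ) - lam ∧ b = lam - (a : Quaternion ℝ) ∧
      d = 2 * lam - (a : Quaternion ℝ) ∧ lam.re = 1 / a := by
  rw [conjTranspose_mul_diagonal_one_neg_one_mul_fin_two, diagonal_fin_two] at hA
  rw [of_fin_two_mulVec_one_one] at heig
  have h00 := congrFun₂ hA 0 0
  have h01 := congrFun₂ hA 0 1
  simp only [of_apply, cons_val', cons_val_zero, cons_val_one, empty_val',
    cons_val_fin_one] at h00 h01
  have hb : b = lam - a := eq_sub_of_add_eq' (congrFun heig 0)
  have hd : d = lam - c := eq_sub_of_add_eq' (congrFun heig 1)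
  have hlam' : lam * star lam = 1 := by
    rwa [Quaternion.self_mul_star, ← Quaternion.star_mul_self]
  have hc : c = a - lam := by
    rw [hb, hd] at h01
    exact eq_sub_of_star_mul_sub_star_mul (Quaternion.star_coe a) hlam' h00 h01
  have hre : a * lam.re = 1 := by
    rw [Quaternion.star_coe, hc] at h00
    exact Quaternion.mul_re_eq_one_of_star_mul_self hlam (by rw [← h00]; abel)
  refine ⟨hc, hb, by rw [hd, hc]; noncomm_ring, ?_⟩
  rw [eq_div_iff (left_ne_zero_of_mul_eq_one hre), mul_comm, hre]

/-- if `A = [[a,b],[c,d]] ∈ Sp(1,1)` (with `a` normalized to be a positive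
real) satisfies `A(1,1)ᵗ = λ(1,1)ᵗ` for a unit quaternion `λ`, then `c = a − λ`,
`b = λ − a`, `d = 2λ − a` and `Re λ = 1/a`. -/
theorem sp11_parabolic_form (a : ℝ) (ha : 0 < a) (b c d lam : Quaternion ℝ)
    (hlam : star lam * lam = 1)
    (hA : (Matrix.of ![![(a : Quaternion ℝ), b], ![c, d]])ᴴ *
            Matrix.diagonal ![1, -1] *
            Matrix.of ![![(a : Quaternion ℝ), b], ![c, d]]
          = Matrix.diagonal ![1, -1])
    (heig : (Matrix.of ![![(a : Quaternion ℝ), b], ![c, d]]).mulVec ![1, 1] = ![lam, lam]) :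
    c = (a : Quaternion ℝ) - lam ∧ b = lam - (a : Quaternion ℝ) ∧
      d = 2 * lam - (a : Quaternion ℝ) ∧ lam.re = 1 / a :=
  sp11_parabolic_form_general a b c d lam hlam hA heig
end

section
/- Let S be a closed surface and let π₁(S) act trivially on the Lie algebra sp(1) ≅ Im ℍ (imaginary quaternions with commutator bracket). Then the quadratic cup-product map H¹(π₁(S), sp(1)) → H²(π₁(S), sp(1)), u ↦ [u,u] (cup product combined with Lie bracket) is surjective. -/
/-!
A normalized 2-cocycle `D` on `G` with values in `A` defines a central extension `E_D` of `G`
by `A`, and `D` is a coboundary exactly when `E_D` splits. For a presented group, send each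
generator `a` to `(a, 0) ∈ E_D`; if every relator goes to `1`, i.e. its fiber vanishes, this
descends to a splitting. That fiber is additive in `D`, so for the surface group it suffices
to find a homomorphism `u` with the fiber of `[u, u]` at `∏ᵢ [aᵢ, bᵢ]` equal to that of `c`.
Computed in the Heisenberg extension of `(Im ℍ, +)` by the bracket, the former is
`∑ᵢ 2 [u aᵢ, u bᵢ]`; as every element of `Im ℍ` is a bracket, it suffices to let `u` be
nonzero only on `a₁, b₁`. Taking imaginary parts keeps the cochains `Im ℍ`-valued.
-/

noncomputable section

/-- The standard surface relator `∏ᵢ [aᵢ, bᵢ]` in the free group on `2g` generators. -/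
def surfaceRel (g : ℕ) : FreeGroup (Fin g ⊕ Fin g) :=
  (List.ofFn (fun i : Fin g =>
    FreeGroup.of (Sum.inl i) * FreeGroup.of (Sum.inr i) *
      (FreeGroup.of (Sum.inl i))⁻¹ * (FreeGroup.of (Sum.inr i))⁻¹)).prod

/-- The fundamental group of the closed orientable surface of genus `g`. -/
abbrev SurfaceGroup (g : ℕ) := PresentedGroup {surfaceRel g}

open scoped commutatorElement Quaternion

section Cocycles

variable {G H A : Type*} [Group G] [Group H] [AddCommGroup A]

def IsTwoCocycle (c : G → G → A) : Prop :=
  ∀ x y z, c y z - c (x * y) z + c x (y * z) - c x y = 0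

def IsTwoCoboundary (c : G → G → A) : Prop :=
  ∃ φ : G → A, ∀ x y, c x y = φ y - φ (x * y) + φ x

theorem isTwoCoboundary_const (k : A) : IsTwoCoboundary fun _ _ : G => k :=
  ⟨fun _ => k, fun _ _ => by abel⟩

theorem IsTwoCoboundary.sub {c₁ c₂ : G → G → A} (h₁ : IsTwoCoboundary c₁)
    (h₂ : IsTwoCoboundary c₂) : IsTwoCoboundary (c₁ - c₂) := by
  obtain ⟨φ₁, hφ₁⟩ := h₁
  obtain ⟨φ₂, hφ₂⟩ := h₂
  refine ⟨φ₁ - φ₂, fun x y => ?_⟩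
  simp only [Pi.sub_apply, hφ₁, hφ₂]
  abel

theorem IsTwoCocycle.map_one_left {c : G → G → A} (hc : IsTwoCocycle c) (y : G) :
    c 1 y = c 1 1 := by
  simpa [sub_eq_zero] using hc 1 1 y

theorem IsTwoCocycle.map_one_right {c : G → G → A} (hc : IsTwoCocycle c) (x : G) :
    c x 1 = c 1 1 := by
  simpa [sub_eq_zero, eq_comm] using hc x 1 1

theorem IsTwoCocycle.sub {c₁ c₂ : G → G → A} (hc₁ : IsTwoCocycle c₁) (hc₂ : IsTwoCocycle c₂) :
    IsTwoCocycle (c₁ - c₂) := fun x y z => by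
  simp only [Pi.sub_apply]
  linear_combination (norm := module) hc₁ x y z - hc₂ x y z

structure NormalizedTwoCocycle (G A : Type*) [Group G] [AddCommGroup A] where
  toFun : G → G → A
  isTwoCocycle : IsTwoCocycle toFun
  map_one_one : toFun 1 1 = 0

namespace NormalizedTwoCocycle

instance : CoeFun (NormalizedTwoCocycle G A) fun _ => G → G → A := ⟨toFun⟩

variable (D : NormalizedTwoCocycle G A)

@[simp] theorem map_one_left (y : G) : D 1 y = 0 := by
  simpa [D.map_one_one] using D.isTwoCocycle.map_one_left y

@[simp] theorem map_one_right (x : G) : D x 1 = 0 := by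
  simpa [D.map_one_one] using D.isTwoCocycle.map_one_right x

theorem map_inv_self (x : G) : D x⁻¹ x = D x x⁻¹ := by
  simpa [sub_eq_zero] using D.isTwoCocycle x x⁻¹ x

instance : Sub (NormalizedTwoCocycle G A) where
  sub D₁ D₂ :=
    ⟨D₁ - D₂, D₁.isTwoCocycle.sub D₂.isTwoCocycle, by simp [D₁.map_one_one, D₂.map_one_one]⟩

@[simp] theorem sub_apply (D₁ D₂ : NormalizedTwoCocycle G A) (x y : G) :
    (D₁ - D₂) x y = D₁ x y - D₂ x y := rfl

def comp (f : H →* G) : NormalizedTwoCocycle H A where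
  toFun x y := D (f x) (f y)
  isTwoCocycle x y z := by simpa only [map_mul] using D.isTwoCocycle (f x) (f y) (f z)
  map_one_one := by simp

@[simp] theorem comp_apply (f : H →* G) (x y : H) : D.comp f x y = D (f x) (f y) := rfl

@[ext] structure Extension (D : NormalizedTwoCocycle G A) where
  base : G
  fiber : A

namespace Extension

instance : Mul D.Extension := ⟨fun x y => ⟨x.base * y.base, x.fiber + y.fiber + D x.base y.base⟩⟩
instance : One D.Extension := ⟨⟨1, 0⟩⟩
instance : Inv D.Extension := ⟨fun x => ⟨x.base⁻¹, -x.fiber - D x.base x.base⁻¹⟩⟩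

variable {D}

@[simp] theorem mul_base (x y : D.Extension) : (x * y).base = x.base * y.base := rfl
@[simp] theorem mul_fiber (x y : D.Extension) :
    (x * y).fiber = x.fiber + y.fiber + D x.base y.base := rfl
@[simp] theorem one_base : (1 : D.Extension).base = 1 := rfl
@[simp] theorem one_fiber : (1 : D.Extension).fiber = 0 := rfl
@[simp] theorem inv_base (x : D.Extension) : x⁻¹.base = x.base⁻¹ := rfl
@[simp] theorem inv_fiber (x : D.Extension) : x⁻¹.fiber = -x.fiber - D x.base x.base⁻¹ := rfl

instance : Group D.Extension :=
  Group.ofLeftAxioms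
    (fun x y z => Extension.ext (mul_assoc _ _ _) (by
      have h := D.isTwoCocycle x.base y.base z.base
      simp only [mul_fiber, mul_base]
      linear_combination (norm := module) -h))
    (fun x => Extension.ext (one_mul _) (by simp))
    (fun x => Extension.ext (inv_mul_cancel _) (by
      simp only [mul_fiber, inv_fiber, inv_base, map_inv_self, one_fiber]
      abel))

variable (D)

def baseHom : D.Extension →* G where
  toFun := base
  map_one' := rfl
  map_mul' _ _ := rfl

def ofFiber : Multiplicative A →* D.Extension where
  toFun a := ⟨1, a.toAdd⟩
  map_one' := rfl
  map_mul' _ _ := Extension.ext (one_mul 1).symm (by simp)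

@[simp] theorem base_ofFiber (a : Multiplicative A) : (ofFiber D a).base = 1 := rfl

@[simp] theorem fiber_ofFiber (a : Multiplicative A) : (ofFiber D a).fiber = a.toAdd := rfl

theorem fiber_prod_ofFn_ofFiber {n : ℕ} (v : Fin n → A) :
    (List.ofFn fun i => ofFiber D (.ofAdd (v i))).prod.fiber = ∑ i, v i := by
  induction n with
  | zero => rfl
  | succ n ih => simp [List.ofFn_succ, Fin.sum_univ_succ, ih]

def compHom (f : H →* G) : (D.comp f).Extension →* D.Extension where
  toFun x := ⟨f x.base, x.fiber⟩
  map_one' := Extension.ext (map_one f) rfl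
  map_mul' _ _ := Extension.ext (map_mul f _ _) rfl

end Extension

theorem isTwoCoboundary_of_section (σ : G →* D.Extension) (hσ : ∀ x, (σ x).base = x) :
    IsTwoCoboundary D := by
  refine ⟨fun x => -(σ x).fiber, fun x y => ?_⟩
  have h := congrArg Extension.fiber (map_mul σ x y)
  rw [Extension.mul_fiber, hσ, hσ] at h
  dsimp only
  rw [h]
  abel

end NormalizedTwoCocycle

theorem IsTwoCocycle.exists_normalized {c : G → G → A} (hc : IsTwoCocycle c) :
    ∃ D : NormalizedTwoCocycle G A, ∀ x y, D x y = c x y - c 1 1 :=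
  ⟨⟨fun x y => c x y - c 1 1, hc.sub fun _ _ _ => by simp, sub_self _⟩, fun _ _ => rfl⟩

end Cocycles

namespace NormalizedTwoCocycle

variable {α A : Type*} [AddCommGroup A] {rels : Set (FreeGroup α)}

section FreeLift

variable (D : NormalizedTwoCocycle (PresentedGroup rels) A)

def freeLift : FreeGroup α →* D.Extension :=
  FreeGroup.lift fun a => ⟨PresentedGroup.of a, 0⟩

@[simp] theorem freeLift_of (a : α) : D.freeLift (.of a) = ⟨PresentedGroup.of a, 0⟩ :=
  FreeGroup.lift_apply_of

@[simp] theorem base_freeLift (w : FreeGroup α) :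
    (D.freeLift w).base = PresentedGroup.mk rels w :=
  DFunLike.congr_fun (FreeGroup.ext_hom (f := (Extension.baseHom D).comp D.freeLift)
    (g := PresentedGroup.mk rels) fun _ => rfl) w

theorem fiber_freeLift_mem (B : AddSubgroup A) (hD : ∀ x y, D x y ∈ B) (w : FreeGroup α) :
    (D.freeLift w).fiber ∈ B := by
  induction w using FreeGroup.induction_on with
  | C1 => exact B.zero_mem
  | of a => simp [B.zero_mem]
  | inv_of a ha =>
    rw [map_inv, Extension.inv_fiber]
    exact B.sub_mem (B.neg_mem ha) (hD _ _)
  | mul x y hx hy =>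
    rw [map_mul, Extension.mul_fiber]
    exact B.add_mem (B.add_mem hx hy) (hD _ _)

theorem isTwoCoboundary_of_fiber_freeLift_eq_zero
    (h : ∀ r ∈ rels, (D.freeLift r).fiber = 0) : IsTwoCoboundary D := by
  have hrels : ∀ r ∈ rels, D.freeLift r = 1 := fun r hr =>
    Extension.ext (by simpa using PresentedGroup.one_of_mem hr) (h r hr)
  let σ := PresentedGroup.toGroup hrels
  have hσ : (Extension.baseHom D).comp σ = MonoidHom.id _ :=
    PresentedGroup.ext fun _ => congrArg Extension.base (PresentedGroup.toGroup.of hrels)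
  exact D.isTwoCoboundary_of_section σ fun x => DFunLike.congr_fun hσ x

end FreeLift

theorem fiber_freeLift_sub (D₁ D₂ : NormalizedTwoCocycle (PresentedGroup rels) A)
    (w : FreeGroup α) :
    ((D₁ - D₂).freeLift w).fiber = (D₁.freeLift w).fiber - (D₂.freeLift w).fiber := by
  let ψ : FreeGroup α →* (D₁ - D₂).Extension :=
    { toFun w := ⟨PresentedGroup.mk rels w, (D₁.freeLift w).fiber - (D₂.freeLift w).fiber⟩
      map_one' := Extension.ext (map_one _) (by simp)
      map_mul' x y := Extension.ext (map_mul _ x y) (by simp; abel) }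
  have : (D₁ - D₂).freeLift = ψ := FreeGroup.ext_hom _ _ fun a => by
    simp [ψ]
    rfl
  rw [this]
  rfl

end NormalizedTwoCocycle

section Bracket

variable (L : Type*) [LieRing L]

def bracketCocycle : NormalizedTwoCocycle (Multiplicative L) L where
  toFun x y := ⁅x.toAdd, y.toAdd⁆
  isTwoCocycle x y z := by simp only [toAdd_mul, lie_add, add_lie]; abel
  map_one_one := by simp

variable {L}

@[simp] theorem bracketCocycle_apply (x y : Multiplicative L) :
    bracketCocycle L x y = ⁅x.toAdd, y.toAdd⁆ := rfl

theorem bracketCocycle_commutatorElement (p q : Multiplicative L) :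
    ⁅(⟨p, 0⟩ : (bracketCocycle L).Extension), (⟨q, 0⟩ : (bracketCocycle L).Extension)⁆
      = NormalizedTwoCocycle.Extension.ofFiber _ (.ofAdd (2 • ⁅p.toAdd, q.toAdd⁆)) := by
  refine NormalizedTwoCocycle.Extension.ext ?_ ?_
  · simp [commutatorElement_def, -ofAdd_nsmul]
  · simp only [commutatorElement_def, NormalizedTwoCocycle.Extension.mul_fiber,
      NormalizedTwoCocycle.Extension.inv_fiber, NormalizedTwoCocycle.Extension.mul_base,
      NormalizedTwoCocycle.Extension.inv_base, bracketCocycle_apply, toAdd_mul, toAdd_inv,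
      NormalizedTwoCocycle.Extension.fiber_ofFiber, toAdd_ofAdd, add_lie, lie_neg,
      neg_lie, lie_self]
    rw [← lie_skew q.toAdd]
    abel

end Bracket

section SurfaceGroup

variable {g : ℕ}

theorem FreeGroup.lift_surfaceRel {G : Type*} [Group G] (f : Fin g ⊕ Fin g → G) :
    FreeGroup.lift f (surfaceRel g) = (List.ofFn fun i => ⁅f (.inl i), f (.inr i)⁆).prod := by
  simp [surfaceRel, map_list_prod, List.map_ofFn, Function.comp_def, commutatorElement_def]

theorem FreeGroup.lift_surfaceRel_eq_one {H : Type*} [CommGroup H] (f : Fin g ⊕ Fin g → H) :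
    FreeGroup.lift f (surfaceRel g) = 1 := by
  simp [FreeGroup.lift_surfaceRel, commutatorElement_def]

def SurfaceGroup.lift {H : Type*} [CommGroup H] (f : Fin g ⊕ Fin g → H) : SurfaceGroup g →* H :=
  PresentedGroup.toGroup fun _ hr =>
    (Set.mem_singleton_iff.1 hr) ▸ FreeGroup.lift_surfaceRel_eq_one f

@[simp] theorem SurfaceGroup.lift_of {H : Type*} [CommGroup H] (f : Fin g ⊕ Fin g → H)
    (s : Fin g ⊕ Fin g) : SurfaceGroup.lift f (PresentedGroup.of s) = f s :=
  PresentedGroup.toGroup.of _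

theorem SurfaceGroup.lift_mem {H : Type*} [CommGroup H] {f : Fin g ⊕ Fin g → H} {S : Subgroup H}
    (hf : ∀ s, f s ∈ S) (x : SurfaceGroup g) : SurfaceGroup.lift f x ∈ S :=
  PresentedGroup.generated_by _ (S.comap (SurfaceGroup.lift f))
    (fun s => by simpa [SurfaceGroup.lift] using hf s) x

variable {L : Type*} [LieRing L]

theorem fiber_freeLift_comp_surfaceRel (f : SurfaceGroup g →* Multiplicative L) :
    (((bracketCocycle L).comp f).freeLift (surfaceRel g)).fiber =
      ∑ i, 2 • ⁅(f (.of (.inl i))).toAdd, (f (.of (.inr i))).toAdd⁆ := by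
  have hlift : (NormalizedTwoCocycle.Extension.compHom _ f).comp
      ((bracketCocycle L).comp f).freeLift = FreeGroup.lift fun s => ⟨f (.of s), 0⟩ :=
    FreeGroup.ext_hom _ _ fun s => by simp; rfl
  calc _ = (FreeGroup.lift (fun s => (⟨f (.of s), 0⟩ : (bracketCocycle L).Extension))
        (surfaceRel g)).fiber := by rw [← hlift]; rfl
    _ = _ := by
      rw [FreeGroup.lift_surfaceRel]
      simp only [bracketCocycle_commutatorElement]
      exact NormalizedTwoCocycle.Extension.fiber_prod_ofFn_ofFiber _ _

end SurfaceGroup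

namespace Quaternion

theorem re_lie {R : Type*} [CommRing R] (a b : ℍ[R]) : ⁅a, b⁆.re = 0 := by
  simp only [Ring.lie_def, re_sub, re_mul]
  ring

theorem im_eq_self_of_re_eq_zero {R : Type*} [CommRing R] {a : ℍ[R]} (h : a.re = 0) :
    a.im = a := by
  simpa [h] using re_add_im a

theorem mem_skewAdjoint_iff {R : Type*} [CommRing R] [NoZeroDivisors R] [CharZero R] {a : ℍ[R]} :
    a ∈ skewAdjoint ℍ[R] ↔ a.re = 0 :=
  skewAdjoint.mem_iff.trans star_eq_neg

theorem exists_lie_eq_of_re_eq_zero {w : ℍ[ℝ]} (hw : w.re = 0) :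
    ∃ p q : ℍ[ℝ], p.re = 0 ∧ q.re = 0 ∧ ⁅p, q⁆ = w := by
  have pure : ∀ a b c : ℝ, ∃ x : ℍ[ℝ], x.re = 0 ∧ x.imI = a ∧ x.imJ = b ∧ x.imK = c :=
    fun a b c => ⟨⟨0, a, b, c⟩, rfl, rfl, rfl, rfl⟩
  by_cases hab : w.imI = 0 ∧ w.imJ = 0
  · obtain ⟨p, hp₀, hp₁, hp₂, hp₃⟩ := pure 1 0 0
    obtain ⟨q, hq₀, hq₁, hq₂, hq₃⟩ := pure 0 (w.imK / 2) 0
    refine ⟨p, q, hp₀, hq₀, ?_⟩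
    rw [Ring.lie_def]
    ext <;> simp [re_mul, imI_mul, imJ_mul, imK_mul, *]
  · have hs : w.imI ^ 2 + w.imJ ^ 2 ≠ 0 := by
      rcases not_and_or.mp hab with h | h <;> positivity
    -- `p` is orthogonal to `w`, and `q = ⁅w, p⁆ / (4 |p|²)`
    obtain ⟨p, hp₀, hp₁, hp₂, hp₃⟩ := pure (-w.imJ) w.imI 0
    obtain ⟨q, hq₀, hq₁, hq₂, hq₃⟩ := pure (-w.imK * w.imI / (2 * (w.imI ^ 2 + w.imJ ^ 2)))
      (-w.imK * w.imJ / (2 * (w.imI ^ 2 + w.imJ ^ 2))) (1 / 2)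
    refine ⟨p, q, hp₀, hq₀, ?_⟩
    rw [Ring.lie_def]
    ext <;> simp [re_mul, imI_mul, imJ_mul, imK_mul, *] <;> field_simp <;> ring

end Quaternion

theorem IsTwoCoboundary.exists_re_eq_zero {G R : Type*} [Group G] [CommRing R]
    {c : G → G → ℍ[R]} (hc : IsTwoCoboundary c) (hre : ∀ x y, (c x y).re = 0) :
    ∃ φ : G → ℍ[R], (∀ x, (φ x).re = 0) ∧ ∀ x y, c x y = φ y - φ (x * y) + φ x := by
  obtain ⟨φ, hφ⟩ := hc
  refine ⟨fun x => (φ x).im, fun x => Quaternion.re_im _, fun x y => ?_⟩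
  rw [← Quaternion.im_eq_self_of_re_eq_zero (hre x y), hφ]
  simp

attribute [local instance] LieRing.ofAssociativeRing

theorem exists_hom_fiber_freeLift_bracketCocycle_comp_eq {g : ℕ} (hg : 1 ≤ g) {v : ℍ[ℝ]}
    (hv : v.re = 0) :
    ∃ f : SurfaceGroup g →* Multiplicative ℍ[ℝ], (∀ x, (f x).toAdd.re = 0) ∧
      (((bracketCocycle ℍ[ℝ]).comp f).freeLift (surfaceRel g)).fiber = v := by
  obtain ⟨p, q, hp, hq, hpq⟩ := Quaternion.exists_lie_eq_of_re_eq_zero (w := (2⁻¹ : ℝ) • v)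
    (by simp [hv])
  let i₀ : Fin g := ⟨0, hg⟩
  let f : SurfaceGroup g →* Multiplicative ℍ[ℝ] :=
    SurfaceGroup.lift fun s => .ofAdd (Sum.elim (Pi.single i₀ p) (Pi.single i₀ q) s)
  have hf : ∀ x, f x ∈ (skewAdjoint ℍ[ℝ]).toSubgroup := SurfaceGroup.lift_mem <| by
    rintro (i | i) <;> rcases eq_or_ne i i₀ with rfl | hi <;>
      simp [*, Quaternion.mem_skewAdjoint_iff]
  refine ⟨f, fun x => by simpa [Quaternion.mem_skewAdjoint_iff] using hf x, ?_⟩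
  rw [fiber_freeLift_comp_surfaceRel, Finset.sum_eq_single i₀ (fun i _ hi => by simp [f, hi])
    (by simp)]
  simp only [f, SurfaceGroup.lift_of, Sum.elim_inl, Sum.elim_inr, Pi.single_eq_same, toAdd_ofAdd,
    hpq]
  module

/-- for `π₁(S)` (`S` a closed surface) acting trivially on
`sp(1) ≅ Im ℍ`, the quadratic cup-bracket map `H¹(π₁(S), sp(1)) → H²(π₁(S), sp(1))`,
`u ↦ [u,u]`, is surjective: every (imaginary-quaternion-valued) 2-cocycle `c` is
cohomologous to `[u,u] : (x,y) ↦ [u(x), u(y)]` for some 1-cocycle `u` (for trivial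
coefficients, 1-cocycles are homomorphisms to `(Im ℍ, +)`). -/
theorem cup_bracket_surjective_sp1 (g : ℕ) (hg : 1 ≤ g)
    (c : SurfaceGroup g → SurfaceGroup g → Quaternion ℝ)
    (hc_im : ∀ x y, (c x y).re = 0)
    (hc_cocycle : ∀ x y z, c y z - c (x * y) z + c x (y * z) - c x y = 0) :
    ∃ u : SurfaceGroup g → Quaternion ℝ,
      (∀ x, (u x).re = 0) ∧ (∀ x y, u (x * y) = u x + u y) ∧
      ∃ φ : SurfaceGroup g → Quaternion ℝ, (∀ x, (φ x).re = 0) ∧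
        ∀ x y, u x * u y - u y * u x = c x y + (φ y - φ (x * y) + φ x) := by
  obtain ⟨c₀, hc₀⟩ := IsTwoCocycle.exists_normalized hc_cocycle
  obtain ⟨f, hf_re, hf⟩ := exists_hom_fiber_freeLift_bracketCocycle_comp_eq hg <|
    Quaternion.mem_skewAdjoint_iff.1 <| c₀.fiber_freeLift_mem (skewAdjoint ℍ[ℝ])
      (fun x y => by simp [Quaternion.mem_skewAdjoint_iff, hc₀, hc_im]) (surfaceRel g)
  have hD : IsTwoCoboundary ((bracketCocycle ℍ[ℝ]).comp f - c₀) :=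
    NormalizedTwoCocycle.isTwoCoboundary_of_fiber_freeLift_eq_zero _ fun r hr => by
      obtain rfl := Set.mem_singleton_iff.1 hr
      rw [NormalizedTwoCocycle.fiber_freeLift_sub, hf, sub_self]
  have hcob : IsTwoCoboundary fun x y => ⁅(f x).toAdd, (f y).toAdd⁆ - c x y := by
    convert hD.sub (isTwoCoboundary_const (c 1 1)) using 1
    funext x y
    simp only [Pi.sub_apply, NormalizedTwoCocycle.sub_apply, NormalizedTwoCocycle.comp_apply,
      bracketCocycle_apply, hc₀]
    abel
  obtain ⟨φ, hφ_re, hφ⟩ := hcob.exists_re_eq_zero fun x y => by simp [Quaternion.re_lie, hc_im]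
  refine ⟨fun x => (f x).toAdd, hf_re, fun x y => by simp, φ, hφ_re, fun x y => ?_⟩
  rw [← Ring.lie_def]
  exact eq_add_of_sub_eq' (hφ x y)
end
end

section
/- Let W ⊂ sp(1,1) be the real subspace of matrices j·[[z, w],[−w, t]] with z, w, t ∈ ℂ. For X = j[[z,w],[−w,t]] and X' = j[[z',w'],[−w',t']] in W, the u(1)-component of the bracket satisfies π_{u(1)}([X, X']) = 2·Im(conj(z)z' + conj(t)t' − 2·conj(w)w'), and this expression defines a (real) symplectic (nondegenerate skew-symmetric bilinear) form on W. -/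
noncomputable section
open Matrix

def toQ (c : ℂ) : Quaternion ℝ := ⟨c.re, c.im, 0, 0⟩
def jQ : Quaternion ℝ := ⟨0, 0, 1, 0⟩
def iQ : Quaternion ℝ := ⟨0, 1, 0, 0⟩

/-- An element `j·[[z,w],[−w,t]]` of the subspace `W ⊂ sp(1,1)`. -/
def Wmat (z w t : ℂ) : Matrix (Fin 2) (Fin 2) (Quaternion ℝ) :=
  Matrix.of ![![jQ * toQ z, jQ * toQ w], ![jQ * (-(toQ w)), jQ * toQ t]]

/-- The projection `π_{u(1)} : sp(1,1) → ℝ`, `[[a,b],[conj b,d]] ↦ Re(i(a+d))`. -/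
def piu1 (A : Matrix (Fin 2) (Fin 2) (Quaternion ℝ)) : ℝ := (iQ * (A 0 0 + A 1 1)).re

/-!
Since `j c = c̄ j` for `c ∈ ℂ`, we get `(j a)(j b) = -āb`, so the diagonal entries of `X X'`
are complex and their sum is `-h(X, X')`, where `h(X, X') = z̄z' + t̄t' - 2w̄w'` is a Hermitian
form of signature `(2,1)`. Thus `π_{u(1)}(X X') = Im h(X, X')`, and `h(X', X) = conj h(X, X')`
turns the bracket into `2 Im h(X, X')`. The imaginary part of a Hermitian form is
skew-symmetric, and it is nondegenerate because `Im h(X, i Y) = Re h(X, Y)`, which is `|z|²`,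
`-2|w|²`, `|t|²` for `Y = (z, 0, 0)`, `(0, w, 0)`, `(0, 0, t)`.
-/

open scoped ComplexConjugate

lemma toQ_eq_ofComplex (c : ℂ) : toQ c = Quaternion.ofComplex c := rfl

lemma iQ_eq_toQ_I : iQ = toQ Complex.I := by
  ext <;> simp [iQ, toQ]

lemma jQ_mul_toQ (c : ℂ) : jQ * toQ c = toQ (conj c) * jQ := by
  apply Quaternion.ext <;>
    simp only [Quaternion.re_mul, Quaternion.imI_mul, Quaternion.imJ_mul, Quaternion.imK_mul] <;>
    simp [jQ, toQ]

lemma jQ_mul_jQ : jQ * jQ = -1 := by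
  apply Quaternion.ext <;>
    simp only [Quaternion.re_mul, Quaternion.imI_mul, Quaternion.imJ_mul, Quaternion.imK_mul,
      Quaternion.re_neg, Quaternion.imI_neg, Quaternion.imJ_neg, Quaternion.imK_neg,
      Quaternion.re_one, Quaternion.imI_one, Quaternion.imJ_one, Quaternion.imK_one] <;>
    simp [jQ]

lemma jQ_mul_toQ_mul_jQ_mul_toQ (a b : ℂ) : jQ * toQ a * (jQ * toQ b) = -toQ (conj a * b) := by
  have h : toQ a * jQ = jQ * toQ (conj a) := by rw [jQ_mul_toQ, Complex.conj_conj]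
  rw [mul_assoc, ← mul_assoc (toQ a), h, ← mul_assoc, ← mul_assoc, jQ_mul_jQ]
  simp only [toQ_eq_ofComplex, map_mul, neg_mul, one_mul]

lemma piu1_sub (A B : Matrix (Fin 2) (Fin 2) (Quaternion ℝ)) :
    piu1 (A - B) = piu1 A - piu1 B := by
  rw [piu1, Matrix.sub_apply, Matrix.sub_apply, sub_add_sub_comm, mul_sub, Quaternion.re_sub,
    piu1, piu1]

def hermW (z w t z' w' t' : ℂ) : ℂ := conj z * z' + conj t * t' - 2 * (conj w * w')

lemma hermW_swap (z w t z' w' t' : ℂ) : hermW z' w' t' z w t = conj (hermW z w t z' w' t') := by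
  simp only [hermW, map_sub, map_add, map_mul, Complex.conj_conj, map_ofNat]
  ring

lemma Wmat_mul_Wmat_diag_sum (z w t z' w' t' : ℂ) :
    (Wmat z w t * Wmat z' w' t') 0 0 + (Wmat z w t * Wmat z' w' t') 1 1
      = -toQ (hermW z w t z' w' t') := by
  simp only [Wmat, Matrix.mul_apply, Fin.sum_univ_two, Matrix.of_apply, Matrix.cons_val_zero,
    Matrix.cons_val_one, mul_neg, neg_mul, jQ_mul_toQ_mul_jQ_mul_toQ, hermW]
  simp only [toQ_eq_ofComplex, map_add, map_sub, map_mul, map_ofNat]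
  noncomm_ring

lemma piu1_Wmat_mul_Wmat (z w t z' w' t' : ℂ) :
    piu1 (Wmat z w t * Wmat z' w' t') = (hermW z w t z' w' t').im := by
  rw [piu1, Wmat_mul_Wmat_diag_sum, iQ_eq_toQ_I, toQ_eq_ofComplex, toQ_eq_ofComplex, mul_neg,
    ← map_mul]
  simp

lemma im_hermW_swap (z w t z' w' t' : ℂ) :
    (hermW z' w' t' z w t).im = -(hermW z w t z' w' t').im := by
  rw [hermW_swap, Complex.conj_im]

lemma hermW_I_mul (z w t z' w' t' : ℂ) :
    hermW z w t (Complex.I * z') (Complex.I * w') (Complex.I * t')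
      = Complex.I * hermW z w t z' w' t' := by
  simp only [hermW]
  ring

lemma eq_zero_of_forall_im_hermW_eq_zero (z w t : ℂ)
    (h : ∀ z' w' t' : ℂ, (hermW z w t z' w' t').im = 0) : z = 0 ∧ w = 0 ∧ t = 0 := by
  have hre : ∀ z' w' t' : ℂ, (hermW z w t z' w' t').re = 0 := fun z' w' t' => by
    simpa only [hermW_I_mul, Complex.I_mul_im] using
      h (Complex.I * z') (Complex.I * w') (Complex.I * t')
  have hz := hre z 0 0
  have hw := hre 0 w 0
  have ht := hre 0 0 t
  simp [hermW, ← Complex.normSq_apply] at hz hw ht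
  exact ⟨hz, hw, ht⟩

/-- for `X, X' ∈ W`, `π_{u(1)}([X,X']) = 2·Im(z̄z' + t̄t' − 2w̄w')`, and this
expression is a nondegenerate skew-symmetric (real) bilinear — i.e. symplectic — form on `W`. -/
theorem piu1_bracket_symplectic :
    (∀ z w t z' w' t' : ℂ,
      piu1 (Wmat z w t * Wmat z' w' t' - Wmat z' w' t' * Wmat z w t)
        = 2 * ((starRingEnd ℂ z * z' + starRingEnd ℂ t * t'
            - 2 * (starRingEnd ℂ w * w')).im)) ∧
    (∀ z w t z' w' t' : ℂ,
      2 * ((starRingEnd ℂ z * z' + starRingEnd ℂ t * t' - 2 * (starRingEnd ℂ w * w')).im)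
        = -(2 * ((starRingEnd ℂ z' * z + starRingEnd ℂ t' * t
            - 2 * (starRingEnd ℂ w' * w)).im))) ∧
    (∀ z w t : ℂ,
      (∀ z' w' t' : ℂ,
        2 * ((starRingEnd ℂ z * z' + starRingEnd ℂ t * t'
            - 2 * (starRingEnd ℂ w * w')).im) = 0) →
      z = 0 ∧ w = 0 ∧ t = 0) := by
  refine ⟨fun z w t z' w' t' => ?_, fun z w t z' w' t' => ?_, fun z w t h => ?_⟩
  · change _ = 2 * (hermW z w t z' w' t').im
    rw [piu1_sub, piu1_Wmat_mul_Wmat, piu1_Wmat_mul_Wmat, im_hermW_swap z w t z' w' t']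
    ring
  · change 2 * (hermW z w t z' w' t').im = -(2 * (hermW z' w' t' z w t).im)
    rw [im_hermW_swap z w t z' w' t']
    ring
  · exact eq_zero_of_forall_im_hermW_eq_zero z w t fun z' w' t' =>
      (mul_eq_zero.mp (h z' w' t')).resolve_left two_ne_zero
end
end

section
/- For the Heisenberg-type boundary of quaternionic hyperbolic plane: a parabolic element of PSp(2,1) fixing the boundary point (0,1) and stabilizing the quaternionic line {(0,ℍ)} is block diagonal of the form diag(μ, [[a, λ−a],[a−λ, 2λ−a]]) with μ ∈ Sp(1), a ≥ 1 real, λ ∈ Sp(1), Re λ = 1/a; in particular, the (1,2) and (1,3) entries vanish, while a parabolic element fixing (0,1) but not stabilizing {(0,ℍ)} has (1,2)-entry x ≠ 0 and (1,3)-entry −x. -/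
noncomputable section
open Matrix

def J3 : Matrix (Fin 3) (Fin 3) (Quaternion ℝ) := Matrix.diagonal ![1, 1, -1]

/-- `A` stabilizes the quaternionic line `{(0,ℍ)}` of the ball model. -/
def StabilizesQLine (A : Matrix (Fin 3) (Fin 3) (Quaternion ℝ)) : Prop :=
  ∀ q : Quaternion ℝ, ‖q‖ < 1 → ∃ q' μ : Quaternion ℝ, ‖q'‖ < 1 ∧ μ ≠ 0 ∧
    A.mulVec ![0, q, 1] = fun i => (![0, q', 1] : Fin 3 → Quaternion ℝ) i * μ

/-! `A` preserves `⟨v, w⟩ = v̄₀w₀ + v̄₁w₁ − v̄₂w₂` (indices from `0`) and sends the null vector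
`n = (0,1,1)` to `n λ₀`. Pairing the columns of `A` with `A n` gives `A 1 0 = A 2 0` and
`A 1 1 − A 2 1 = λ₀`; the row sums give `A 0 1 + A 0 2 = 0`. If `A 0 1 = 0`, then `A` maps
`(0,q,1)` to a vector with first entry `0` which is negative for `‖q‖ < 1`, hence lies on the
line; conversely `A (0,0,1)` on the line forces `A 0 2 = 0`. When `A 0 1 = 0`, `⟨Ae₀, Ae₁⟩ = 0`
forces `A 1 0 = 0`, and `⟨Ae₁, Ae₁⟩ = 1` reads `⟪A 1 1, λ₀⟫_ℝ = 1`; so `b = A 1 1` has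
`‖b‖ ≥ 1`, and right multiplication by the unit `s = b̄ / ‖b‖` makes it the real `a = ‖b‖`,
with `λ = λ₀ s` of real part `1 / a`. -/

open Quaternion

theorem star_mulVec_dotProduct_mulVec_of_conjTranspose_mul_mul_eq {R n : Type*}
    [NonUnitalSemiring R] [StarRing R] [Fintype n] {A J : Matrix n n R}
    (hA : Aᴴ * J * A = J) (v w : n → R) :
    star (A *ᵥ v) ⬝ᵥ (J *ᵥ (A *ᵥ w)) = star v ⬝ᵥ (J *ᵥ w) := by
  rw [star_mulVec, ← dotProduct_mulVec, mulVec_mulVec, mulVec_mulVec, hA]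

theorem Quaternion.star_mul_self_eq_one_iff {q : ℍ[ℝ]} : star q * q = 1 ↔ ‖q‖ = 1 := by
  rw [star_mul_self, normSq_eq_norm_mul_self, ← coe_one, coe_inj, mul_self_eq_one_iff,
    or_iff_left (by linarith [norm_nonneg q])]

theorem Quaternion.eq_mul_star_of_star_mul_eq {x l c : ℍ[ℝ]} (hl : ‖l‖ = 1)
    (h : star x * l = c) : x = l * star c := by
  have hl' : l * star l = 1 := mul_eq_one_comm.mp (star_mul_self_eq_one_iff.mpr hl)
  rw [← h, star_mul, star_star, ← mul_assoc, hl', one_mul]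

theorem J3_mul_self : J3 * J3 = 1 := by
  rw [J3, diagonal_mul_diagonal, ← diagonal_one]
  congr 1
  funext i
  fin_cases i <;> simp

def hermForm (v w : Fin 3 → ℍ[ℝ]) : ℍ[ℝ] :=
  star (v 0) * w 0 + star (v 1) * w 1 - star (v 2) * w 2

theorem hermForm_eq_star_dotProduct (v w : Fin 3 → ℍ[ℝ]) :
    hermForm v w = star v ⬝ᵥ (J3 *ᵥ w) := by
  simp [hermForm, J3, dotProduct, mulVec_diagonal, Fin.sum_univ_three, sub_eq_add_neg]

theorem hermForm_self (v : Fin 3 → ℍ[ℝ]) :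
    hermForm v v = ((‖v 0‖ ^ 2 + ‖v 1‖ ^ 2 - ‖v 2‖ ^ 2 : ℝ) : ℍ[ℝ]) := by
  simp only [hermForm, star_mul_self, normSq_eq_norm_mul_self, sq]
  push_cast
  rfl

section Sp21

variable {A : Matrix (Fin 3) (Fin 3) ℍ[ℝ]} {lam0 : ℍ[ℝ]}

theorem hermForm_mulVec (hA : Aᴴ * J3 * A = J3) (v w : Fin 3 → ℍ[ℝ]) :
    hermForm (A *ᵥ v) (A *ᵥ w) = hermForm v w := by
  simp only [hermForm_eq_star_dotProduct,
    star_mulVec_dotProduct_mulVec_of_conjTranspose_mul_mul_eq hA]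

theorem hermForm_col_col (hA : Aᴴ * J3 * A = J3) (i j : Fin 3) :
    hermForm (fun k => A k i) (fun k => A k j) = J3 i j := by
  have h := hermForm_mulVec hA (Pi.single i 1) (Pi.single j 1)
  rw [mulVec_single_one, mulVec_single_one] at h
  exact h.trans (by fin_cases i <;> fin_cases j <;> simp [hermForm, J3])

theorem row_sums (heig : A *ᵥ ![0, 1, 1] = ![0, lam0, lam0]) :
    A 0 1 + A 0 2 = 0 ∧ A 1 1 + A 1 2 = lam0 ∧ A 2 1 + A 2 2 = lam0 := by
  have h := congrFun heig
  simp only [mulVec, dotProduct, Fin.sum_univ_three] at h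
  exact ⟨by simpa using h 0, by simpa using h 1, by simpa using h 2⟩

theorem star_sub_mul_eq_hermForm (hA : Aᴴ * J3 * A = J3)
    (heig : A *ᵥ ![0, 1, 1] = ![0, lam0, lam0]) (i : Fin 3) :
    star (A 1 i - A 2 i) * lam0 = hermForm (Pi.single i 1) ![0, 1, 1] := by
  rw [← hermForm_mulVec hA, heig, mulVec_single_one]
  simp [hermForm, star_sub, sub_mul]

theorem entry_one_zero_eq_entry_two_zero (hA : Aᴴ * J3 * A = J3)
    (heig : A *ᵥ ![0, 1, 1] = ![0, lam0, lam0]) (hl : ‖lam0‖ = 1) : A 1 0 = A 2 0 := by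
  have h : star (A 1 0 - A 2 0) * lam0 = 0 := by
    simpa [hermForm] using star_sub_mul_eq_hermForm hA heig 0
  simpa [sub_eq_zero] using eq_mul_star_of_star_mul_eq hl h

theorem entry_two_one_eq (hA : Aᴴ * J3 * A = J3)
    (heig : A *ᵥ ![0, 1, 1] = ![0, lam0, lam0]) (hl : ‖lam0‖ = 1) :
    A 2 1 = A 1 1 - lam0 := by
  have h : star (A 1 1 - A 2 1) * lam0 = 1 := by
    simpa [hermForm] using star_sub_mul_eq_hermForm hA heig 1
  have h' := eq_mul_star_of_star_mul_eq hl h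
  rw [star_one, mul_one] at h'
  rw [← h', sub_sub_cancel]

theorem entry_one_zero_eq_zero (hA : Aᴴ * J3 * A = J3)
    (heig : A *ᵥ ![0, 1, 1] = ![0, lam0, lam0]) (hl : ‖lam0‖ = 1) (h01 : A 0 1 = 0) :
    A 1 0 = 0 := by
  have h : star (A 1 0) * lam0 = 0 := by
    have h := hermForm_col_col hA 0 1
    simp only [hermForm] at h
    rwa [J3, diagonal_apply_ne _ (by decide), h01, mul_zero, zero_add,
      ← entry_one_zero_eq_entry_two_zero hA heig hl, ← mul_sub,
      entry_two_one_eq hA heig hl, sub_sub_cancel] at h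
  simpa using eq_mul_star_of_star_mul_eq hl h

theorem exists_mul_eq_of_norm_lt {x : Fin 3 → ℍ[ℝ]} (hx0 : x 0 = 0) (hx : ‖x 1‖ < ‖x 2‖) :
    ∃ q' μ : ℍ[ℝ], ‖q'‖ < 1 ∧ μ ≠ 0 ∧ x = fun i => (![0, q', 1] : Fin 3 → ℍ[ℝ]) i * μ := by
  have hx2 : x 2 ≠ 0 := norm_pos_iff.mp ((norm_nonneg _).trans_lt hx)
  refine ⟨x 1 * (x 2)⁻¹, x 2, ?_, hx2, ?_⟩
  · rwa [norm_mul, norm_inv, ← div_eq_mul_inv, div_lt_one (norm_pos_iff.mpr hx2)]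
  · funext i
    fin_cases i <;> simp [hx0, mul_assoc, inv_mul_cancel₀ hx2]

theorem stabilizesQLine_iff (hA : Aᴴ * J3 * A = J3)
    (heig : A *ᵥ ![0, 1, 1] = ![0, lam0, lam0]) : StabilizesQLine A ↔ A 0 1 = 0 := by
  have hrow := (row_sums heig).1
  constructor
  · intro h
    obtain ⟨q', μ, -, -, hv⟩ := h 0 (by simp)
    have h02 : A 0 2 = 0 := by
      simpa [mulVec, dotProduct, Fin.sum_univ_three] using congrFun hv 0
    simpa [h02] using hrow
  · intro h01 q hq
    have h02 : A 0 2 = 0 := by simpa [h01] using hrow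
    have h0 : (A *ᵥ ![0, q, 1]) 0 = 0 := by
      simp [mulVec, dotProduct, Fin.sum_univ_three, h01, h02]
    have hform : ‖(A *ᵥ ![0, q, 1]) 1‖ ^ 2 - ‖(A *ᵥ ![0, q, 1]) 2‖ ^ 2 = ‖q‖ ^ 2 - 1 := by
      have h := hermForm_mulVec hA ![0, q, 1] ![0, q, 1]
      rw [hermForm_self, hermForm_self, coe_inj] at h
      simpa [h0] using h
    refine exists_mul_eq_of_norm_lt h0 (lt_of_pow_lt_pow_left₀ 2 (norm_nonneg _) ?_)
    nlinarith [norm_nonneg q]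

theorem inner_entry_one_one_eq_one (hA : Aᴴ * J3 * A = J3)
    (heig : A *ᵥ ![0, 1, 1] = ![0, lam0, lam0]) (hl : ‖lam0‖ = 1) (h01 : A 0 1 = 0) :
    inner ℝ (A 1 1) lam0 = 1 := by
  have h := hermForm_col_col hA 1 1
  have h11 : J3 1 1 = ((1 : ℝ) : ℍ[ℝ]) := by simp [J3]
  rw [hermForm_self, h11, coe_inj, h01, entry_two_one_eq hA heig hl, norm_sub_sq_real, hl] at h
  simp only [norm_zero] at h
  linarith

theorem eq_block_of_entry_zero_one_eq_zero (hA : Aᴴ * J3 * A = J3)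
    (heig : A *ᵥ ![0, 1, 1] = ![0, lam0, lam0]) (hl : ‖lam0‖ = 1) (h01 : A 0 1 = 0) :
    A = of ![![A 0 0, 0, 0], ![0, A 1 1, lam0 - A 1 1], ![0, A 1 1 - lam0, 2 * lam0 - A 1 1]] := by
  obtain ⟨h0, h1, h2⟩ := row_sums heig
  have h10 := entry_one_zero_eq_zero hA heig hl h01
  have h20 : A 2 0 = 0 := entry_one_zero_eq_entry_two_zero hA heig hl ▸ h10
  have h21 := entry_two_one_eq hA heig hl
  have h22 : A 2 2 = 2 * lam0 - A 1 1 := by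
    rw [eq_sub_of_add_eq' h2, h21, two_mul]
    abel
  refine Matrix.ext fun i j => ?_
  fin_cases i <;> fin_cases j <;>
    simp [h01, h10, h20, h21, h22, eq_sub_of_add_eq' h1, eq_neg_of_add_eq_zero_right h0]

theorem norm_entry_zero_zero (hA : Aᴴ * J3 * A = J3) (h10 : A 1 0 = 0) (h20 : A 2 0 = 0) :
    ‖A 0 0‖ = 1 := by
  have h := hermForm_col_col hA 0 0
  have h00 : J3 0 0 = ((1 : ℝ) : ℍ[ℝ]) := by simp [J3]
  rwa [hermForm_self, h00, coe_inj, h10, h20, norm_zero, zero_pow two_ne_zero, add_zero,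
    sub_zero, pow_eq_one_iff_of_nonneg (norm_nonneg _) two_ne_zero] at h

end Sp21

theorem Quaternion.exists_norm_eq_one_mul_eq_norm {b l : ℍ[ℝ]} (hl : ‖l‖ = 1)
    (hb : inner ℝ b l = 1) :
    ∃ s : ℍ[ℝ], ‖s‖ = 1 ∧ b * s = ‖b‖ ∧ 1 ≤ ‖b‖ ∧ (l * s).re = 1 / ‖b‖ := by
  have hb1 : 1 ≤ ‖b‖ := by simpa [hb, hl] using real_inner_le_norm b l
  have hb0 : ‖b‖ ≠ 0 := by positivity
  refine ⟨(‖b‖⁻¹ : ℝ) • star b, ?_, ?_, hb1, ?_⟩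
  · rw [norm_smul, norm_star, norm_inv, norm_norm, inv_mul_cancel₀ hb0]
  · rw [mul_smul_comm, self_mul_star, normSq_eq_norm_mul_self, smul_coe, inv_mul_cancel_left₀ hb0]
  · rw [mul_smul_comm, re_smul, ← inner_def, real_inner_comm, hb, one_div, smul_eq_mul, mul_one]

theorem of_block_mul_smul_one {R : Type*} [Ring R] {m b l s a : R} (hbs : b * s = a) :
    of ![![m, 0, 0], ![0, b, l - b], ![0, b - l, 2 * l - b]] * (s • 1) =
      of ![![m * s, 0, 0], ![0, a, l * s - a], ![0, a - l * s, 2 * (l * s) - a]] := by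
  rw [smul_one_eq_diagonal]
  ext i j
  fin_cases i <;> fin_cases j <;> simp [mul_diagonal, sub_mul, mul_assoc, hbs]

/-- let `A ∈ Sp(2,1)` fix the boundary point `(0,1)` (i.e.
`A(0,1,1)ᵗ = (0,1,1)ᵗλ₀`, `λ₀ ∈ Sp(1)`).  If `A` stabilizes the quaternionic line
`{(0,ℍ)}`, then `A` is block diagonal and, as an element of `PSp(2,1)` (up to conjugation
in `Sp(2,1)` and a nonzero scalar), equals `diag(μ, [[a, λ−a],[a−λ, 2λ−a]])` with
`μ ∈ Sp(1)`, `a ≥ 1` real, `λ ∈ Sp(1)`, `Re λ = 1/a`.  If `A` does not stabilize the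
line, then its `(1,2)`-entry `x` is nonzero and its `(1,3)`-entry is `−x`. -/
theorem parabolic_normal_form (A : Matrix (Fin 3) (Fin 3) (Quaternion ℝ))
    (hA : Aᴴ * J3 * A = J3) (lam0 : Quaternion ℝ) (hlam0 : star lam0 * lam0 = 1)
    (heig : A.mulVec ![0, 1, 1] = ![0, lam0, lam0]) :
    (StabilizesQLine A →
      A 0 1 = 0 ∧ A 0 2 = 0 ∧ A 1 0 = 0 ∧ A 2 0 = 0 ∧
      ∃ g : Matrix (Fin 3) (Fin 3) (Quaternion ℝ), gᴴ * J3 * g = J3 ∧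
        ∃ (s μ lam : Quaternion ℝ) (a : ℝ), s ≠ 0 ∧ star μ * μ = 1 ∧
          star lam * lam = 1 ∧ 1 ≤ a ∧ lam.re = 1 / a ∧
          g * A * (J3 * gᴴ * J3) * (s • (1 : Matrix (Fin 3) (Fin 3) (Quaternion ℝ)))
            = Matrix.of ![![μ, 0, 0],
                ![0, (a : Quaternion ℝ), lam - (a : Quaternion ℝ)],
                ![0, (a : Quaternion ℝ) - lam, 2 * lam - (a : Quaternion ℝ)]]) ∧
    (¬ StabilizesQLine A → A 0 1 ≠ 0 ∧ A 0 2 = -(A 0 1)) := by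
  have hl : ‖lam0‖ = 1 := star_mul_self_eq_one_iff.mp hlam0
  have hstab := stabilizesQLine_iff hA heig
  refine ⟨fun h => ?_, fun h => ⟨mt hstab.2 h, eq_neg_of_add_eq_zero_right (row_sums heig).1⟩⟩
  have h01 := hstab.1 h
  have hblock := eq_block_of_entry_zero_one_eq_zero hA heig hl h01
  have h10 : A 1 0 = 0 := by rw [hblock]; rfl
  have h20 : A 2 0 = 0 := by rw [hblock]; rfl
  obtain ⟨s, hs, hbs, ha, hre⟩ :=
    exists_norm_eq_one_mul_eq_norm hl (inner_entry_one_one_eq_one hA heig hl h01)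
  refine ⟨h01, by rw [hblock]; rfl, h10, h20, 1, by simp, s, A 0 0 * s, lam0 * s, ‖A 1 1‖,
    norm_ne_zero_iff.mp (hs ▸ one_ne_zero), ?_, ?_, ha, hre, ?_⟩
  · rw [star_mul_self_eq_one_iff, norm_mul, norm_entry_zero_zero hA h10 h20, hs, one_mul]
  · rw [star_mul_self_eq_one_iff, norm_mul, hl, hs, one_mul]
  · simp only [conjTranspose_one, mul_one, one_mul, J3_mul_self]
    conv_lhs => rw [hblock]
    exact of_block_mul_smul_one hbs
end
end
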